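/- Let n = pq with p, q distinct primes, let e be coprime to φ(n), and let k be a positive integer. Define E_{n,e,k} = {x ∈ Z_n : x^(e^k) ≡ x (mod n), and x^(e^j) ≢ x (mod n) for all positive j < k}. Then |E_{n,e,k}| = Σ_{d | k} μ(k/d) · (gcd(e^d − 1, p − 1) + 1) · (gcd(e^d − 1, q − 1) + 1). -/

import Mathlib

/-! Points of exact period `k` of `x ↦ x ^ e` are counted by Möbius inversion from the points of
period dividing `d`, i.e. the solutions of `x ^ e ^ d = x`. By the Chinese remainder theorem these
are pairs of solutions modulo `p` and modulo `q`; in the field `ZMod p` they are `0` together with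
the `(e ^ d - 1)`-th roots of unity of the cyclic group `(ZMod p)ˣ` of order `p - 1`, of which
there are `gcd (e ^ d - 1) (p - 1)`. -/

open Function

namespace Function

variable {α : Type*} {f : α → α} {x : α} {k : ℕ}

theorem minimalPeriod_eq_iff (hk : 0 < k) :
    minimalPeriod f x = k ↔
      IsPeriodicPt f k x ∧ ∀ j, 0 < j → j < k → ¬IsPeriodicPt f j x := by
  constructor
  · rintro rfl
    exact ⟨isPeriodicPt_minimalPeriod f x, fun _ hj hjk =>
      not_isPeriodicPt_of_pos_of_lt_minimalPeriod hj.ne' hjk⟩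
  · rintro ⟨hper, hmin⟩
    refine (hper.minimalPeriod_le hk).antisymm (not_lt.mp fun hlt => ?_)
    exact hmin _ (hper.minimalPeriod_pos hk) hlt (isPeriodicPt_minimalPeriod f x)

variable [Finite α] (f)

theorem sum_card_minimalPeriod_eq_card_isPeriodicPt (hk : 0 < k) :
    ∑ d ∈ k.divisors, Nat.card {x // minimalPeriod f x = d} =
      Nat.card {x // IsPeriodicPt f k x} := by
  classical
  have := Fintype.ofFinite α
  simp only [Nat.card_eq_fintype_card, Fintype.card_subtype,
    isPeriodicPt_iff_minimalPeriod_dvd]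
  rw [Finset.card_eq_sum_card_fiberwise (f := (minimalPeriod f ·)) (t := k.divisors)
    fun x hx => Nat.mem_divisors.mpr ⟨(Finset.mem_filter.mp hx).2, hk.ne'⟩]
  refine Finset.sum_congr rfl fun d hd => congrArg Finset.card ?_
  ext x
  simp only [Finset.mem_filter, Finset.mem_univ, true_and, iff_and_self]
  exact fun h => h ▸ Nat.dvd_of_mem_divisors hd

theorem card_minimalPeriod_eq_sum_moebius (hk : 0 < k) :
    (Nat.card {x // minimalPeriod f x = k} : ℤ) =
      ∑ d ∈ k.divisors, ArithmeticFunction.moebius (k / d) *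
        (Nat.card {x // IsPeriodicPt f d x} : ℤ) := by
  have hinv := (ArithmeticFunction.sum_eq_iff_sum_mul_moebius_eq
    (f := fun d => (Nat.card {x // minimalPeriod f x = d} : ℤ))
    (g := fun d => (Nat.card {x // IsPeriodicPt f d x} : ℤ))).mp
    (fun n hn => by exact_mod_cast sum_card_minimalPeriod_eq_card_isPeriodicPt f hn) k hk
  rw [← hinv]
  simpa only [Int.cast_id] using Nat.sum_divisorsAntidiagonal'
    (fun a b => (ArithmeticFunction.moebius a : ℤ) * Nat.card {x // IsPeriodicPt f b x})

end Function

theorem FiniteField.card_pow_eq_self (K : Type*) [Field K] [Finite K] {E : ℕ} (hE : E ≠ 0) :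
    Nat.card {a : K // a ^ E = a} = (E - 1).gcd (Nat.card K - 1) + 1 := by
  have hset : {a : K | a ^ E = a} =
      insert 0 (Units.val '' ((powMonoidHom (E - 1) : Kˣ →* Kˣ).ker : Set Kˣ)) := by
    ext a
    rcases eq_or_ne a 0 with rfl | ha
    · simp [hE]
    · have hpow : a ^ E = a ↔ a ^ (E - 1) = 1 := by
        conv_lhs => rw [← Nat.sub_add_cancel (Nat.one_le_iff_ne_zero.mpr hE), pow_succ]
        exact mul_eq_right₀ ha
      simp only [Set.mem_ofPred_eq, hpow, Set.mem_insert_iff, ha, false_or, Set.mem_image,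
        SetLike.mem_coe, MonoidHom.mem_ker, powMonoidHom_apply]
      exact ⟨fun h => ⟨Units.mk0 a ha, Units.ext h, rfl⟩,
        fun ⟨u, hu, hua⟩ => hua ▸ by simpa using congrArg Units.val hu⟩
  rw [← Set.coe_ofPred, Nat.card_coe_set_eq, hset, Set.ncard_insert_of_notMem (by simp),
    Set.ncard_image_of_injective _ Units.val_injective, ← Nat.card_coe_set_eq,
    SetLike.coe_sort_coe, IsCyclic.card_powMonoidHom_ker, Nat.card_units, Nat.gcd_comm]

theorem ZMod.card_pow_eq_self_mul {m n : ℕ} (h : m.Coprime n) (E : ℕ) :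
    Nat.card {x : ZMod (m * n) // x ^ E = x} =
      Nat.card {a : ZMod m // a ^ E = a} * Nat.card {b : ZMod n // b ^ E = b} := by
  rw [← Nat.card_prod, ← Nat.card_congr Equiv.subtypeProdEquivProd]
  refine Nat.card_congr ((ZMod.chineseRemainder h).toEquiv.subtypeEquiv fun x => ?_)
  rw [← (ZMod.chineseRemainder h).injective.eq_iff, map_pow, Prod.ext_iff, Prod.pow_fst,
    Prod.pow_snd]
  rfl

def ZMod.subtypeNatLtEquiv (n : ℕ) [NeZero n] (P : ZMod n → Prop) :
    {x : ℕ // x < n ∧ P x} ≃ {y : ZMod n // P y} where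
  toFun x := ⟨x.1, x.2.2⟩
  invFun y := ⟨y.1.val, y.1.val_lt, by rw [ZMod.natCast_zmod_val]; exact y.2⟩
  left_inv x := Subtype.ext (ZMod.val_cast_of_lt x.2.1)
  right_inv y := Subtype.ext (ZMod.natCast_zmod_val y.1)

theorem stmt4 (p q e k : ℕ) (hp : p.Prime) (hq : q.Prime) (hpq : p ≠ q)
    (he : Nat.Coprime e (Nat.totient (p * q))) (hk : 0 < k) :
    (Nat.card {x : ℕ // x < p * q ∧
        x ^ e ^ k ≡ x [MOD p * q] ∧
        ∀ j, 0 < j → j < k → ¬ x ^ e ^ j ≡ x [MOD p * q]} : ℤ) =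
      ∑ d ∈ k.divisors, (ArithmeticFunction.moebius (k / d)) *
        ((Nat.gcd (e ^ d - 1) (p - 1) : ℤ) + 1) * ((Nat.gcd (e ^ d - 1) (q - 1) : ℤ) + 1) := by
  have : Fact p.Prime := ⟨hp⟩
  have : Fact q.Prime := ⟨hq⟩
  have : NeZero (p * q) := ⟨Nat.mul_ne_zero hp.ne_zero hq.ne_zero⟩
  have he0 : e ≠ 0 := by
    rintro rfl
    have := Nat.totient_eq_one_iff.mp (Nat.coprime_zero_left _ |>.mp he)
    have := Nat.mul_le_mul hp.two_le hq.two_le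
    omega
  set f : ZMod (p * q) → ZMod (p * q) := (· ^ e)
  have hperiodic (d : ℕ) (x : ZMod (p * q)) : IsPeriodicPt f d x ↔ x ^ e ^ d = x := by
    rw [IsPeriodicPt, IsFixedPt, pow_iterate]
  have hcount (d : ℕ) : Nat.card {x // IsPeriodicPt f d x} =
      ((e ^ d - 1).gcd (p - 1) + 1) * ((e ^ d - 1).gcd (q - 1) + 1) := by
    rw [Nat.card_congr (Equiv.subtypeEquivRight (hperiodic d)),
      ZMod.card_pow_eq_self_mul ((Nat.coprime_primes hp hq).mpr hpq),
      FiniteField.card_pow_eq_self _ (pow_ne_zero d he0),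
      FiniteField.card_pow_eq_self _ (pow_ne_zero d he0), Nat.card_zmod, Nat.card_zmod]
  have hexact : Nat.card {x : ℕ // x < p * q ∧ x ^ e ^ k ≡ x [MOD p * q] ∧
        ∀ j, 0 < j → j < k → ¬ x ^ e ^ j ≡ x [MOD p * q]} =
      Nat.card {x : ZMod (p * q) // minimalPeriod f x = k} := by
    refine (Nat.card_congr (Equiv.subtypeEquivRight fun x => ?_)).trans
      (Nat.card_congr (ZMod.subtypeNatLtEquiv (p * q) (minimalPeriod f · = k)))
    simp only [minimalPeriod_eq_iff hk, hperiodic, ← ZMod.natCast_eq_natCast_iff, Nat.cast_pow]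
  rw [hexact, card_minimalPeriod_eq_sum_moebius f hk]
  refine Finset.sum_congr rfl fun d _ => ?_
  rw [hcount]
  push_cast
  ring
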